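/- Let k be a field of characteristic 2, n odd with n ≥ 3, and a, b ∈ k with b ≠ 0. Let G ∈ k[y, z₁,…,zₙ] be a polynomial such that G(0, z₁, 0,…,0) = b·z₁³ as a polynomial in z₁. Then the affine hypersurface in k^{n+1} (coordinates y, z₁,…,zₙ) defined by F = a·z₁² + z₂z₃ + z₄z₅ + ⋯ + z_{n−1}zₙ + y·G − 1 = 0 has no Jacobian-singular point whose y-coordinate equals 0. -/
import Mathlib


open MvPolynomial

/-- Let `k` be a field of characteristic 2, `n = 2m+1` odd with `n ≥ 3`
(i.e. `m ≥ 1`), and `a, b ∈ k` with `b ≠ 0`.  Let `G ∈ k[y, z₁, …, zₙ]` be a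
polynomial with `G(0, z₁, 0, …, 0) = b·z₁³` (as a polynomial in `z₁`).  Then
the affine hypersurface defined by
`F = a·z₁² + z₂z₃ + ⋯ + z_{n−1}zₙ + y·G − 1 = 0` has no Jacobian-singular
point with `y`-coordinate `0`.  (Coordinates indexed by
`Option (Option (Fin m ⊕ Fin m))`: `y = none`, `z₁ = some none`, pairs
`z₂z₃, …, z_{n−1}zₙ` indexed by `some (some (Sum.inl i))`,
`some (some (Sum.inr i))`.) -/
theorem no_singular_point_almost_nondegenerate_chart
    {k : Type*} [Field k] [CharP k 2] (m : ℕ) (hm : 1 ≤ m) (a b : k) (hb : b ≠ 0)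
    (G : MvPolynomial (Option (Option (Fin m ⊕ Fin m))) k)
    (hG : aeval (fun v : Option (Option (Fin m ⊕ Fin m)) =>
        if v = some none then (Polynomial.X : Polynomial k) else 0) G
      = Polynomial.C b * Polynomial.X ^ 3)
    (P : Option (Option (Fin m ⊕ Fin m)) → k) (hP : P none = 0) :
    ¬ (eval P (C a * X (some none) ^ 2
          + (∑ i : Fin m, X (some (some (Sum.inl i))) * X (some (some (Sum.inr i))))
          + X none * G - 1) = 0 ∧
        ∀ v, eval P (pderiv v (C a * X (some none) ^ 2
          + (∑ i : Fin m, X (some (some (Sum.inl i))) * X (some (some (Sum.inr i))))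
          + X none * G - 1)) = 0) := by
  rintro ⟨h0, hd⟩
  -- all z-coordinates except z₁ vanish
  have hinl : ∀ i : Fin m, P (some (some (Sum.inl i))) = 0 := by
    intro i
    have := hd (some (some (Sum.inr i)))
    simpa [pderiv_mul, pderiv_X, Pi.single_apply, hP, Finset.sum_ite_eq'] using this
  have hinr : ∀ i : Fin m, P (some (some (Sum.inr i))) = 0 := by
    intro i
    have := hd (some (some (Sum.inl i)))
    simpa [pderiv_mul, pderiv_X, Pi.single_apply, hP, Finset.sum_ite_eq'] using this
  -- the equation forces a * z₁² = 1
  have heq : a * P (some none) ^ 2 = 1 := by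
    have := h0
    simp [hP, hinl, hinr] at this
    linear_combination this
  have hz1 : P (some none) ≠ 0 := by
    intro h
    rw [h] at heq
    simp at heq
  -- evaluating G at P equals b * z₁³
  have hGP : eval P G = b * P (some none) ^ 3 := by
    have hcomp := AlgHom.congr_fun
      (comp_aeval (fun v : Option (Option (Fin m ⊕ Fin m)) =>
        if v = some none then (Polynomial.X : Polynomial k) else 0)
        (Polynomial.aeval (P (some none)))) G
    simp only [AlgHom.coe_comp, Function.comp_apply, hG] at hcomp
    have hfun : (fun v : Option (Option (Fin m ⊕ Fin m)) =>
        (Polynomial.aeval (P (some none)))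
          (if v = some none then (Polynomial.X : Polynomial k) else 0)) = P := by
      funext v
      match v with
      | none => simp [hP]
      | some none => simp
      | some (some (Sum.inl i)) => simp [hinl i]
      | some (some (Sum.inr i)) => simp [hinr i]
    rw [hfun] at hcomp
    have : (aeval P) G = eval P G := by
      rw [← coe_aeval_eq_eval]; rfl
    rw [this] at hcomp
    rw [← hcomp]
    simp [Polynomial.aeval_def]
  -- derivative with respect to y
  have := hd none
  have hpd : eval P (pderiv none (C a * X (some none) ^ 2
          + (∑ i : Fin m, X (some (some (Sum.inl i))) * X (some (some (Sum.inr i))))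
          + X none * G - 1)) = eval P G := by
    simp [pderiv_mul, pderiv_X, Pi.single_apply, hP]
  rw [hpd, hGP] at this
  exact hb (by
    rcases mul_eq_zero.mp this with h | h
    · exact h
    · exact absurd (pow_eq_zero_iff (by norm_num) |>.mp h) hz1)
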